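/- arXiv:2409.03139 — 2 statements merged into one kernel-verified Lean document; each statement's English description precedes it below -/
import Mathlib

section
/- Let U ⊆ ℝ³ be open, let d : U → ℝ be twice continuously differentiable with ‖∇d(y)‖ = 1 for all y ∈ U, and set n = ∇d (so the level sets {d = c} are the surfaces at fixed distance c from the surface S = {d = 0}). Let v : U → ℝ³ be a differentiable vector field that is tangent to every level set of d, i.e., ⟨v(y), n(y)⟩ = 0 for all y ∈ U. Then for every x ∈ U one has ⟨(Dv(x))(n(x)), n(x)⟩ = 0, where Dv(x) is the total derivative of v at x. Consequently the Euclidean divergence of v coincides on S with the surface divergence ∇_S · v := ∇ · v − n · (Dv) n. -/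
open scoped InnerProductSpace

/-- The Euclidean divergence of a vector field `v : ℝ³ → ℝ³` at `x`. -/
noncomputable def euclideanDiv (v : EuclideanSpace ℝ (Fin 3) → EuclideanSpace ℝ (Fin 3))
    (x : EuclideanSpace ℝ (Fin 3)) : ℝ :=
  ∑ i : Fin 3, fderiv ℝ v x (EuclideanSpace.single i 1) i

/-- Theorem 2 of the paper. Let `d` be C² on the open set `U` with
`‖∇d‖ ≡ 1` (so its level sets are the surfaces at fixed distance from `S = {d = 0}`),
and let `v` be a differentiable vector field tangent to every level set of `d`
(`⟪v, ∇d⟫ = 0` on `U`). Then `⟪(Dv(x))(n(x)), n(x)⟫ = 0` for every `x ∈ U`, where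
`n = ∇d`; consequently the Euclidean divergence of `v` coincides with the surface
divergence `∇_S · v = ∇ · v − ⟨(Dv) n, n⟩`. -/
theorem div_eq_surface_div_of_tangent_to_level_sets
    (U : Set (EuclideanSpace ℝ (Fin 3))) (hU : IsOpen U)
    (d : EuclideanSpace ℝ (Fin 3) → ℝ) (hd : ContDiffOn ℝ 2 d U)
    (heik : ∀ y ∈ U, ‖gradient d y‖ = 1)
    (v : EuclideanSpace ℝ (Fin 3) → EuclideanSpace ℝ (Fin 3))
    (hv : ∀ y ∈ U, DifferentiableAt ℝ v y)
    (htang : ∀ y ∈ U, ⟪v y, gradient d y⟫_ℝ = 0) :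
    ∀ x ∈ U, ⟪fderiv ℝ v x (gradient d x), gradient d x⟫_ℝ = 0 ∧
      euclideanDiv v x =
        euclideanDiv v x - ⟪fderiv ℝ v x (gradient d x), gradient d x⟫_ℝ := by
  intro x hx
  have hE : True := trivial
  set g : EuclideanSpace ℝ (Fin 3) → EuclideanSpace ℝ (Fin 3) := gradient d with hg
  have hxU : U ∈ nhds x := hU.mem_nhds hx
  have hd2 : ContDiffAt ℝ 2 d x := hd.contDiffAt hxU
  -- differentiability of `fderiv d` at points of `U`
  have hfd : ∀ y ∈ U, DifferentiableAt ℝ (fderiv ℝ d) y := by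
    intro y hy
    have : ContDiffAt ℝ 1 (fderiv ℝ d) y :=
      (hd.contDiffAt (hU.mem_nhds hy)).fderiv_right (m := 1) (by norm_num)
    exact this.differentiableAt one_ne_zero
  -- `g = iso ∘ fderiv d`
  have hgeq : g = (InnerProductSpace.toDual ℝ (EuclideanSpace ℝ (Fin 3))).symm ∘ (fderiv ℝ d) := rfl
  have hgdiff : ∀ y ∈ U, DifferentiableAt ℝ g y := by
    intro y hy
    rw [hgeq]
    exact ((InnerProductSpace.toDual ℝ (EuclideanSpace ℝ (Fin 3))).symm.differentiable.differentiableAt).comp y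
      (hfd y hy)
  -- fderiv of g in terms of second derivative of d
  have hfg : ∀ w u : EuclideanSpace ℝ (Fin 3), ⟪fderiv ℝ g x w, u⟫_ℝ = fderiv ℝ (fderiv ℝ d) x w u := by
    intro w u
    rw [hgeq, LinearIsometryEquiv.comp_fderiv]
    simp only [ContinuousLinearMap.coe_comp', Function.comp_apply,
      LinearIsometryEquiv.coe_coe]
    exact InnerProductSpace.toDual_symm_apply
  -- symmetry of the second derivative
  have hsymm : ∀ w u : EuclideanSpace ℝ (Fin 3), fderiv ℝ (fderiv ℝ d) x w u = fderiv ℝ (fderiv ℝ d) x u w :=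
    fun w u => hd2.isSymmSndFDerivAt (by simp [minSmoothness_of_isRCLikeNormedField]) w u
  -- derivative of ⟪g, g⟫ vanishes since ‖g‖ = 1 on U
  have h2 : ∀ w : EuclideanSpace ℝ (Fin 3), ⟪fderiv ℝ g x w, g x⟫_ℝ = 0 := by
    intro w
    have hconst : (fun y => ⟪g y, g y⟫_ℝ) =ᶠ[nhds x] fun _ => (1 : ℝ) := by
      filter_upwards [hxU] with y hy
      have := heik y hy
      have h1 : ⟪g y, g y⟫_ℝ = ‖g y‖ ^ 2 := real_inner_self_eq_norm_sq (g y)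
      rw [h1, this]; norm_num
    have hfz : fderiv ℝ (fun y => ⟪g y, g y⟫_ℝ) x = 0 := by
      rw [hconst.fderiv_eq, fderiv_fun_const]; rfl
    have := fderiv_inner_apply (𝕜 := ℝ) (hgdiff x hx) (hgdiff x hx) w
    rw [hfz] at this
    simp only [ContinuousLinearMap.zero_apply] at this
    have hcomm : ⟪g x, fderiv ℝ g x w⟫_ℝ = ⟪fderiv ℝ g x w, g x⟫_ℝ := real_inner_comm _ _
    linarith [this, hcomm]
  -- derivative of ⟪v, g⟫ vanishes since it is 0 on U
  have h1 : ∀ w : EuclideanSpace ℝ (Fin 3), ⟪v x, fderiv ℝ g x w⟫_ℝ + ⟪fderiv ℝ v x w, g x⟫_ℝ = 0 := by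
    intro w
    have hconst : (fun y => ⟪v y, g y⟫_ℝ) =ᶠ[nhds x] fun _ => (0 : ℝ) := by
      filter_upwards [hxU] with y hy
      exact htang y hy
    have hfz : fderiv ℝ (fun y => ⟪v y, g y⟫_ℝ) x = 0 := by
      rw [hconst.fderiv_eq, fderiv_fun_const]; rfl
    have := fderiv_inner_apply (𝕜 := ℝ) (hv x hx) (hgdiff x hx) w
    rw [hfz] at this
    simp only [ContinuousLinearMap.zero_apply] at this
    linarith [this]
  -- combine: ⟪v x, Dg (g x)⟫ = ⟪Dg (v x), g x⟫ = 0
  have hkey : ⟪v x, fderiv ℝ g x (g x)⟫_ℝ = 0 := by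
    have e1 : ⟪v x, fderiv ℝ g x (g x)⟫_ℝ = ⟪fderiv ℝ g x (g x), v x⟫_ℝ :=
      real_inner_comm _ _
    rw [e1, hfg, hsymm, ← hfg]
    exact h2 (v x)
  have hmain : ⟪fderiv ℝ v x (g x), g x⟫_ℝ = 0 := by
    have := h1 (g x)
    linarith [this, hkey]
  exact ⟨hmain, by rw [hmain]; ring⟩
end

section
/- Let l ∈ ℕ and let P : ℝ³ → ℝ be a smooth function that is positively homogeneous of degree l (P(c • x) = c^l P(x) for all c > 0) and harmonic on ℝ³ \ {0} (ΔP = 0 there). Define v : ℝ³ \ {0} → ℝ by v(y) = P(y)/‖y‖^l. Then for every x with ‖x‖ = 1, the Euclidean Laplacian of v at x equals −l(l+1) P(x): Δv(x) = −l(l+1) P(x). -/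
/-- The Euclidean Laplacian of `u : ℝ³ → ℝ` at `x`. -/
noncomputable def euclideanLaplacian (u : EuclideanSpace ℝ (Fin 3) → ℝ)
    (x : EuclideanSpace ℝ (Fin 3)) : ℝ :=
  ∑ i : Fin 3,
    fderiv ℝ (fun y => fderiv ℝ u y (EuclideanSpace.single i 1)) x (EuclideanSpace.single i 1)

open scoped RealInnerProductSpace

namespace CPMaux
abbrev E3 := EuclideanSpace ℝ (Fin 3)

lemma hq' (y : E3) : HasFDerivAt (fun z : E3 => ⟪z, z⟫) ((2:ℝ) • (innerSL ℝ y)) y := by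
  have h := (hasFDerivAt_id y).inner ℝ (hasFDerivAt_id y)
  refine h.congr_fderiv ?_
  ext w
  simp [real_inner_comm, two_smul, mul_comm]

lemma hqe' (e x : E3) : HasFDerivAt (fun z : E3 => ⟪z, e⟫) (innerSL ℝ e) x := by
  have h := (hasFDerivAt_id x).inner ℝ (hasFDerivAt_const e x)
  refine h.congr_fderiv ?_
  ext w
  simp [real_inner_comm, mul_comm]

lemma hrpow' (b : ℝ) (y : E3) (hy : y ≠ 0) :
    HasFDerivAt (fun z : E3 => (⟪z, z⟫ : ℝ) ^ b)
      ((b * (⟪y, y⟫ : ℝ) ^ (b - 1) * 2) • innerSL ℝ y) y := by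
  have h0 : (⟪y, y⟫ : ℝ) ≠ 0 := fun h => hy (inner_self_eq_zero.mp h)
  have h := (Real.hasDerivAt_rpow_const (p := b) (Or.inl h0)).comp_hasFDerivAt
      (f := fun z : E3 => ⟪z, z⟫) y (hq' y)
  refine h.congr_fderiv ?_
  rw [smul_smul]

lemma sum_single' (x : E3) : ∑ i : Fin 3, x i • EuclideanSpace.single i (1:ℝ) = x := by
  have h := (EuclideanSpace.basisFun (Fin 3) ℝ).sum_repr x
  simpa [EuclideanSpace.basisFun_apply, EuclideanSpace.basisFun_repr] using h

lemma hD' (P : E3 → ℝ) (hP : ContDiff ℝ (⊤ : ℕ∞) P) (e x : E3) :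
    HasFDerivAt (fun y : E3 => fderiv ℝ P y e)
      ((ContinuousLinearMap.apply ℝ ℝ e).comp (fderiv ℝ (fderiv ℝ P) x)) x := by
  have h1 : ContDiff ℝ (⊤ : ℕ∞) (fderiv ℝ P) := hP.fderiv_right (m := (⊤ : ℕ∞)) (by simp)
  exact (ContinuousLinearMap.apply ℝ ℝ e).hasFDerivAt.comp x
    (h1.differentiable (by simp) x).hasFDerivAt

lemma vw' (l : ℕ) (P : E3 → ℝ) (y : E3) :
    P y / ‖y‖ ^ l = P y * (⟪y, y⟫ : ℝ) ^ (-(l:ℝ)/2) := by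
  rcases eq_or_ne y 0 with rfl | hy
  · rcases Nat.eq_zero_or_pos l with rfl | hl
    · simp
    · have hne : -(l:ℝ)/2 ≠ 0 := by
        have : (0:ℝ) < l := by exact_mod_cast hl
        have : -(l:ℝ)/2 < 0 := by linarith
        exact ne_of_lt this
      simp [zero_pow hl.ne', inner_zero_left, Real.zero_rpow hne]
  · have hny : (0:ℝ) < ‖y‖ := norm_pos_iff.mpr hy
    rw [real_inner_self_eq_norm_sq]
    rw [← Real.rpow_natCast ‖y‖ 2, ← Real.rpow_natCast ‖y‖ l, ← Real.rpow_mul hny.le]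
    rw [div_eq_mul_inv, ← Real.rpow_neg hny.le]
    norm_num
    left
    rw [show (2:ℝ) * (-(l:ℝ)/2) = -(l:ℝ) by ring, Real.rpow_neg hny.le, Real.rpow_natCast]

lemma euler' (l : ℕ) (P : E3 → ℝ) (hP : ContDiff ℝ (⊤ : ℕ∞) P)
    (hhom : ∀ c : ℝ, 0 < c → ∀ x : E3, P (c • x) = c ^ l * P x) (x : E3) :
    fderiv ℝ P x x = l * P x := by
  have hd : HasDerivAt (fun c : ℝ => P (c • x)) (fderiv ℝ P x x) 1 := by
    have h1 : HasDerivAt (fun c : ℝ => c • x) ((1:ℝ) • x) 1 :=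
      (hasDerivAt_id 1).smul_const x
    have h2 : HasFDerivAt P (fderiv ℝ P x) ((1:ℝ) • x) := by
      simpa using (hP.differentiable (by simp) ((1:ℝ) • x)).hasFDerivAt
    have h3 := h2.comp_hasDerivAt 1 h1
    rw [one_smul] at h3
    exact h3
  have heq : (fun c : ℝ => P (c • x)) =ᶠ[nhds 1] fun c : ℝ => c ^ l * P x := by
    filter_upwards [eventually_gt_nhds (by norm_num : (0:ℝ) < 1)] with c hc
    exact hhom c hc x
  have hd2 : HasDerivAt (fun c : ℝ => c ^ l * P x) (fderiv ℝ P x x) 1 :=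
    hd.congr_of_eventuallyEq heq.symm
  have hd3 : HasDerivAt (fun c : ℝ => c ^ l * P x) ((l * 1 ^ (l - 1)) * P x) 1 :=
    (hasDerivAt_pow l 1).mul_const (P x)
  have := hd2.unique hd3
  simpa using this

end CPMaux

open CPMaux

/-- ambient form of the spherical-harmonic eigenvalue relation.
If `P : ℝ³ → ℝ` is smooth, positively homogeneous of degree `l`, and harmonic away from
the origin, then the degree-0 homogeneous (closest point) extension `v(y) = P(y)/‖y‖^l`
satisfies `Δv(x) = −l(l+1) P(x)` for every `x` on the unit sphere. -/
theorem laplacian_closest_point_extension_solid_harmonic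
    (l : ℕ) (P : EuclideanSpace ℝ (Fin 3) → ℝ) (hP : ContDiff ℝ (⊤ : ℕ∞) P)
    (hhom : ∀ c : ℝ, 0 < c → ∀ x : EuclideanSpace ℝ (Fin 3), P (c • x) = c ^ l * P x)
    (hharm : ∀ x : EuclideanSpace ℝ (Fin 3), x ≠ 0 → euclideanLaplacian P x = 0) :
    ∀ x : EuclideanSpace ℝ (Fin 3), ‖x‖ = 1 →
      euclideanLaplacian (fun y => P y / ‖y‖ ^ l) x = -((l : ℝ) * ((l : ℝ) + 1)) * P x := by
  intro x hx
  have hx0 : x ≠ 0 := by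
    intro h; rw [h, norm_zero] at hx; norm_num at hx
  have qx : (⟪x, x⟫ : ℝ) = 1 := by
    rw [real_inner_self_eq_norm_sq, hx]; norm_num
  set a : ℝ := -(l:ℝ)/2 with ha
  have hPd : Differentiable ℝ P := hP.differentiable (by simp)
  have hvw : (fun y : E3 => P y / ‖y‖ ^ l) = fun y : E3 => P y * (⟪y, y⟫ : ℝ) ^ a :=
    funext (vw' l P)
  rw [hvw]
  set w : E3 → ℝ := fun y : E3 => P y * (⟪y, y⟫ : ℝ) ^ a with hwdef
  -- first derivative of w at any y ≠ 0
  have hw : ∀ y : E3, y ≠ 0 → HasFDerivAt w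
      (P y • ((a * (⟪y, y⟫ : ℝ) ^ (a - 1) * 2) • innerSL ℝ y)
        + ((⟪y, y⟫ : ℝ) ^ a) • fderiv ℝ P y) y := by
    intro y hy
    exact (hPd y).hasFDerivAt.mul (hrpow' a y hy)
  -- second derivative formula for each direction e
  have key : ∀ e : E3,
      fderiv ℝ (fun y => fderiv ℝ w y e) x e =
        P x * (a * 2 * ⟪e, e⟫ + ⟪x, e⟫ * ((a - 1) * 2 * (a * 2) * ⟪x, e⟫))
          + (a * 2 * ⟪x, e⟫) * fderiv ℝ P x e
          + (fderiv ℝ (fderiv ℝ P) x e e + fderiv ℝ P x e * (a * 2 * ⟪x, e⟫)) := by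
    intro e
    have heF : (fun y => fderiv ℝ w y e) =ᶠ[nhds x]
        fun y : E3 => P y * (a * (⟪y, y⟫ : ℝ) ^ (a - 1) * 2 * ⟪y, e⟫)
          + (⟪y, y⟫ : ℝ) ^ a * fderiv ℝ P y e := by
      filter_upwards [isOpen_compl_singleton.mem_nhds (by simpa using hx0 :
          x ∈ ({0} : Set E3)ᶜ)] with y hy
      rw [(hw y (by simpa using hy)).fderiv]
      simp [innerSL_apply_apply]
    have hC : HasFDerivAt (fun y : E3 => a * (⟪y, y⟫ : ℝ) ^ (a - 1) * 2)
        ((2:ℝ) • a • (((a - 1) * (⟪x, x⟫ : ℝ) ^ (a - 1 - 1) * 2) • innerSL ℝ x)) x :=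
      ((hrpow' (a - 1) x hx0).const_mul a).mul_const 2
    have hT1 := (hPd x).hasFDerivAt.mul (hC.mul (hqe' e x))
    have hT2 := (hrpow' a x hx0).mul (hD' P hP e x)
    have hF : HasFDerivAt (fun y : E3 => P y * (a * (⟪y, y⟫ : ℝ) ^ (a - 1) * 2 * ⟪y, e⟫)
        + (⟪y, y⟫ : ℝ) ^ a * fderiv ℝ P y e) _ x := hT1.add hT2
    rw [heF.fderiv_eq, hF.fderiv]
    simp [qx, hx, Real.one_rpow, innerSL_apply_apply]
    ring
  -- facts about the standard basis
  have hxe : ∀ i : Fin 3, (⟪x, EuclideanSpace.single i (1:ℝ)⟫ : ℝ) = x i := by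
    intro i; simp [EuclideanSpace.inner_single_right]
  have hee : ∀ i : Fin 3,
      (⟪(EuclideanSpace.single i (1:ℝ) : E3), EuclideanSpace.single i (1:ℝ)⟫ : ℝ) = 1 := by
    intro i; simp [EuclideanSpace.inner_single_right]
  -- pure second derivatives of P sum to the Laplacian, which vanishes
  have hB : ∑ i : Fin 3, fderiv ℝ (fderiv ℝ P) x (EuclideanSpace.single i 1)
      (EuclideanSpace.single i 1) = 0 := by
    have hlap := hharm x hx0
    unfold euclideanLaplacian at hlap
    rw [← hlap]
    refine Finset.sum_congr rfl fun i _ => ?_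
    rw [(hD' P hP (EuclideanSpace.single i 1) x).fderiv]
    simp
  -- Euler's identity in coordinates
  have hsum1 : ∑ i : Fin 3, x i * fderiv ℝ P x (EuclideanSpace.single i 1) = l * P x := by
    have h1 := euler' l P hP hhom x
    rw [← h1]
    calc ∑ i : Fin 3, x i * fderiv ℝ P x (EuclideanSpace.single i 1)
        = ∑ i : Fin 3, fderiv ℝ P x (x i • EuclideanSpace.single i 1) := by
          refine Finset.sum_congr rfl fun i _ => ?_
          rw [map_smul]; simp
      _ = fderiv ℝ P x (∑ i : Fin 3, x i • EuclideanSpace.single i 1) := (map_sum _ _ _).symm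
      _ = fderiv ℝ P x x := by rw [sum_single']
  have hsum2 : ∑ i : Fin 3, x i * x i = 1 := by
    have h := EuclideanSpace.norm_eq x
    rw [hx] at h
    have h2 : (0:ℝ) ≤ ∑ i : Fin 3, x i ^ 2 := by positivity
    have h3 : Real.sqrt (∑ i : Fin 3, x i ^ 2) = 1 := by
      rw [show (∑ i : Fin 3, x i ^ 2) = ∑ i : Fin 3, ‖x i‖ ^ 2 from
        Finset.sum_congr rfl fun i _ => by rw [Real.norm_eq_abs, sq_abs], ← h]
    have h4 : ∑ i : Fin 3, x i ^ 2 = 1 := by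
      nlinarith [Real.sq_sqrt h2]
    rw [← h4]
    refine Finset.sum_congr rfl fun i _ => ?_
    ring
  unfold euclideanLaplacian
  rw [Finset.sum_congr rfl fun i _ => key (EuclideanSpace.single i 1)]
  simp only [hxe, hee]
  have expand : ∀ i : Fin 3,
      P x * (a * 2 * 1 + x i * ((a - 1) * 2 * (a * 2) * x i))
          + (a * 2 * x i) * fderiv ℝ P x (EuclideanSpace.single i 1)
          + (fderiv ℝ (fderiv ℝ P) x (EuclideanSpace.single i 1) (EuclideanSpace.single i 1)
            + fderiv ℝ P x (EuclideanSpace.single i 1) * (a * 2 * x i)) =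
        fderiv ℝ (fderiv ℝ P) x (EuclideanSpace.single i 1) (EuclideanSpace.single i 1)
          + (4 * a) * (x i * fderiv ℝ P x (EuclideanSpace.single i 1))
          + (a * 2) * P x + (4 * a * (a - 1)) * P x * (x i * x i) := by
    intro i; ring
  rw [Finset.sum_congr rfl fun i _ => expand i]
  rw [Finset.sum_add_distrib, Finset.sum_add_distrib, Finset.sum_add_distrib,
    ← Finset.mul_sum, ← Finset.mul_sum]
  rw [hB, hsum1]
  have : ∑ i : Fin 3, (4 * a * (a - 1)) * P x * (x i * x i)
      = (4 * a * (a - 1)) * P x * ∑ i : Fin 3, x i * x i := by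
    rw [Finset.mul_sum]
  rw [this, hsum2, Finset.sum_const]
  simp only [Finset.card_univ, Fintype.card_fin, nsmul_eq_mul, ha]
  ring
end
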